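/- arXiv:1202.0920 — 4 statements merged into one kernel-verified Lean document; each statement's English description precedes it below -/
import Mathlib

section
/- For a collection of m coupons where coupon i is drawn independently with probability p_i > 0 at each trial (with p_1 + ... + p_m = 1), the expected number of trials needed to obtain at least one copy of every coupon equals the integral from 0 to infinity of (1 - ∏_{i=1}^m (1 - e^{-p_i t})) dt. -/
/-!
Both sides equal `∑_{∅ ≠ S} (-1)^{|S|+1} / p_S`, where `p_S = ∑_{i ∈ S} p_i`.

On the left, `E[T] = ∑_n P(T > n)`, and `T > n` means that some coupon is missing after `n` draws.
By independence the first `n` draws all avoid `S` with probability `(1 - p_S)^n`, so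
inclusion–exclusion over the missing coupons gives `P(T > n) = ∑_{∅ ≠ S} (-1)^{|S|+1} (1 - p_S)^n`,
a combination of geometric series. On the right, expanding the product gives
`∑_{∅ ≠ S} (-1)^{|S|+1} e^{-p_S t}`, and `∫_0^∞ e^{-p_S t} dt = 1 / p_S`.
-/

open MeasureTheory ProbabilityTheory Filter Finset

theorem Finset.one_sub_prod_one_sub {ι R : Type*} [CommRing R] (s : Finset ι) (x : ι → R) :
    1 - ∏ i ∈ s, (1 - x i) = ∑ t ∈ s.powerset with t.Nonempty, (-1) ^ (#t + 1) * ∏ i ∈ t, x i := by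
  classical
  rw [prod_sub, ← sum_filter_add_sum_filter_not s.powerset (·.Nonempty)]
  simp [not_nonempty_iff_eq_empty, filter_eq', pow_succ]

theorem integral_exp_neg_mul_Ioi_zero {b : ℝ} (hb : 0 < b) :
    ∫ t in Set.Ioi (0 : ℝ), Real.exp (-b * t) = b⁻¹ := by
  rw [integral_exp_mul_Ioi (neg_neg_of_pos hb)]
  simp

theorem integral_one_sub_prod_one_sub_exp {ι : Type*} [Fintype ι] {p : ι → ℝ}
    (hp : ∀ i, 0 < p i) :
    ∫ t in Set.Ioi (0 : ℝ), (1 - ∏ i, (1 - Real.exp (-(p i) * t)))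
      = ∑ s ∈ univ.powerset with s.Nonempty, (-1) ^ (#s + 1) * (∑ i ∈ s, p i)⁻¹ := by
  have hpos : ∀ s : Finset ι, s.Nonempty → 0 < ∑ i ∈ s, p i := fun s hs =>
    sum_pos (fun i _ => hp i) hs
  have hexp : ∀ (t : ℝ) (s : Finset ι),
      ∏ i ∈ s, Real.exp (-(p i) * t) = Real.exp (-(∑ i ∈ s, p i) * t) := fun t s => by
    simp only [← Real.exp_sum, neg_mul, sum_neg_distrib, sum_mul]
  simp_rw [one_sub_prod_one_sub, hexp]
  rw [integral_finsetSum _ fun s hs => ?_]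
  · refine sum_congr rfl fun s hs => ?_
    rw [integral_const_mul, integral_exp_neg_mul_Ioi_zero (hpos s (mem_filter.1 hs).2)]
  · exact (integrableOn_exp_mul_Ioi (neg_neg_of_pos (hpos s (mem_filter.1 hs).2)) 0).const_mul _

theorem setOf_lt_sInf_eq {Ω : Type*} {E : ℕ → Set Ω} (hE : Monotone E) (n : ℕ) :
    {ω | n < sInf {k | ω ∈ E k}} = (E n)ᶜ ∩ ⋃ k, E k := by
  ext ω
  simp only [Set.mem_ofPred_eq, Set.mem_inter_iff, Set.mem_compl_iff, Set.mem_iUnion]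
  constructor
  · intro h
    refine ⟨fun hn => (Nat.sInf_le hn).not_gt h, ?_⟩
    by_contra! hnone
    simp [hnone] at h
  · rintro ⟨hn, k, hk⟩
    by_contra! hle
    exact hn (hE hle (Nat.sInf_mem (s := {k | ω ∈ E k}) ⟨k, hk⟩))

theorem integral_natCast_eq_of_hasSum {Ω : Type*} [MeasurableSpace Ω] {μ : Measure Ω}
    [IsFiniteMeasure μ] {T : Ω → ℕ} (hT : ∀ n, MeasurableSet {ω | n < T ω}) {a : ℝ}
    (h : HasSum (fun n => μ.real {ω | n < T ω}) a) : ∫ ω, (T ω : ℝ) ∂μ = a := by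
  have hT_eq : ∀ ω, (T ω : ℝ) = ∑' n, {ω | n < T ω}.indicator 1 ω := fun ω => by
    rw [tsum_eq_sum (s := range (T ω)) (fun n hn => by simp_all)]
    simp [Set.indicator_apply, filter_true_of_mem fun n => mem_range.1]
  have hnorm : ∀ n, ∫ ω, ‖{ω | n < T ω}.indicator (1 : Ω → ℝ) ω‖ ∂μ = μ.real {ω | n < T ω} :=
    fun n => by
      simp only [norm_indicator_eq_indicator_norm, Pi.one_apply, norm_one]
      exact integral_indicator_one (hT n)
  simp_rw [hT_eq]
  rw [← integral_tsum_of_summable_integral_norm]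
  · simpa [integral_indicator_one (hT _)] using h.tsum_eq
  · exact fun n => (integrable_const 1).indicator (hT n)
  · exact h.summable.congr fun n => (hnorm n).symm

namespace CouponCollector

variable {Ω ι : Type*}

def collected (X : ℕ → Ω → ι) (n : ℕ) : Set Ω := {ω | ∀ i, ∃ k < n, X k ω = i}

/-- Equals `0` (as `sInf ∅ = 0`) on the event that some coupon never appears, which is null by
`measure_compl_iUnion_collected`. -/
noncomputable def waitingTime (X : ℕ → Ω → ι) (ω : Ω) : ℕ := sInf {n | ω ∈ collected X n}

variable {X : ℕ → Ω → ι}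

theorem collected_mono : Monotone (collected X) :=
  fun _ _ hab _ h i => (h i).imp fun _ hk => ⟨hk.1.trans_le hab, hk.2⟩

theorem compl_collected [Fintype ι] (n : ℕ) :
    (collected X n)ᶜ = ⋃ i ∈ (univ : Finset ι), ⋂ k ∈ range n, X k ⁻¹' {i}ᶜ := by
  ext ω
  simp [collected]

variable [MeasurableSpace Ω] [MeasurableSpace ι] [MeasurableSingletonClass ι]

theorem measurableSet_collected [Fintype ι] (hX : ∀ n, Measurable (X n)) (n : ℕ) :
    MeasurableSet (collected X n) := by
  rw [← compl_compl (collected X n), compl_collected]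
  exact (measurableSet_biUnion _ fun i _ =>
    measurableSet_biInter _ fun k _ => hX k (measurableSet_singleton i).compl).compl

theorem measurableSet_lt_waitingTime [Fintype ι] (hX : ∀ n, Measurable (X n)) (n : ℕ) :
    MeasurableSet {ω | n < waitingTime X ω} := by
  unfold waitingTime
  rw [setOf_lt_sInf_eq collected_mono]
  exact (measurableSet_collected hX n).compl.inter
    (MeasurableSet.iUnion (measurableSet_collected hX))

variable {μ : Measure Ω} [IsProbabilityMeasure μ] {p : ι → ℝ}

theorem measureReal_preimage_compl {Y : Ω → ι} (hY : Measurable Y)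
    (hdist : ∀ i, μ.real (Y ⁻¹' {i}) = p i) (s : Finset ι) :
    μ.real (Y ⁻¹' (↑s)ᶜ) = 1 - ∑ i ∈ s, p i := by
  rw [Set.preimage_compl, measureReal_compl (hY s.measurableSet), probReal_univ,
    ← sum_measureReal_preimage_singleton s fun i _ => hY (measurableSet_singleton i)]
  simp [hdist]

theorem measureReal_biInter_preimage_compl (hX : ∀ n, Measurable (X n)) (hindep : iIndepFun X μ)
    (hdist : ∀ n i, μ.real (X n ⁻¹' {i}) = p i) (s : Finset ι) (n : ℕ) :
    μ.real (⋂ k ∈ range n, X k ⁻¹' (↑s)ᶜ) = (1 - ∑ i ∈ s, p i) ^ n := by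
  rw [measureReal_def, hindep.meas_biInter fun k _ => ⟨(↑s)ᶜ, s.measurableSet.compl, rfl⟩,
    ENNReal.toReal_prod]
  simp only [← measureReal_def, measureReal_preimage_compl (hX _) (hdist _), prod_const,
    card_range]

theorem measureReal_compl_collected [Fintype ι] (hX : ∀ n, Measurable (X n))
    (hindep : iIndepFun X μ) (hdist : ∀ n i, μ.real (X n ⁻¹' {i}) = p i) (n : ℕ) :
    μ.real (collected X n)ᶜ
      = ∑ s ∈ univ.powerset with s.Nonempty, (-1) ^ (#s + 1) * (1 - ∑ i ∈ s, p i) ^ n := by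
  rw [compl_collected, measureReal_biUnion_eq_sum_powerset fun i _ =>
    measurableSet_biInter _ fun k _ => hX k (measurableSet_singleton i).compl]
  refine sum_congr rfl fun s _ => ?_
  rw [← measureReal_biInter_preimage_compl hX hindep hdist, Set.iInter₂_comm]
  simp only [← Set.preimage_iInter₂, ← Set.compl_iUnion₂, ← mem_coe, Set.biUnion_of_singleton]

theorem hasSum_measureReal_compl_collected [Fintype ι] (hX : ∀ n, Measurable (X n))
    (hindep : iIndepFun X μ) (hdist : ∀ n i, μ.real (X n ⁻¹' {i}) = p i) (hp : ∀ i, 0 < p i) :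
    HasSum (fun n => μ.real (collected X n)ᶜ)
      (∑ s ∈ univ.powerset with s.Nonempty, (-1) ^ (#s + 1) * (∑ i ∈ s, p i)⁻¹) := by
  simp_rw [measureReal_compl_collected hX hindep hdist]
  refine hasSum_sum fun s hs => HasSum.mul_left _ ?_
  have hq_pos : 0 < ∑ i ∈ s, p i := sum_pos (fun i _ => hp i) (mem_filter.1 hs).2
  have hq_le : 0 ≤ 1 - ∑ i ∈ s, p i :=
    measureReal_preimage_compl (hX 0) (hdist 0) s ▸ measureReal_nonneg
  simpa using hasSum_geometric_of_lt_one hq_le (by linarith)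

theorem measure_compl_iUnion_collected [Fintype ι] (hX : ∀ n, Measurable (X n))
    (hindep : iIndepFun X μ) (hdist : ∀ n i, μ.real (X n ⁻¹' {i}) = p i) (hp : ∀ i, 0 < p i) :
    μ (⋃ n, collected X n)ᶜ = 0 := by
  have hlim := (hasSum_measureReal_compl_collected hX hindep hdist hp).summable.tendsto_atTop_zero
  rw [← measureReal_eq_zero_iff]
  refine le_antisymm (ge_of_tendsto' hlim fun n => measureReal_mono ?_) measureReal_nonneg
  exact Set.compl_subset_compl.2 (Set.subset_iUnion _ n)

theorem hasSum_measureReal_lt_waitingTime [Fintype ι] (hX : ∀ n, Measurable (X n))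
    (hindep : iIndepFun X μ) (hdist : ∀ n i, μ.real (X n ⁻¹' {i}) = p i) (hp : ∀ i, 0 < p i) :
    HasSum (fun n => μ.real {ω | n < waitingTime X ω})
      (∑ s ∈ univ.powerset with s.Nonempty, (-1) ^ (#s + 1) * (∑ i ∈ s, p i)⁻¹) := by
  unfold waitingTime
  simp_rw [setOf_lt_sInf_eq collected_mono, measureReal_def,
    measure_inter_conull (measure_compl_iUnion_collected hX hindep hdist hp), ← measureReal_def]
  exact hasSum_measureReal_compl_collected hX hindep hdist hp

end CouponCollector

theorem couponCollector_integral_formula_general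
    {Ω : Type*} [MeasurableSpace Ω] (μ : Measure Ω) [IsProbabilityMeasure μ]
    (m : ℕ) (p : Fin m → ℝ) (hp : ∀ i, 0 < p i)
    (X : ℕ → Ω → Fin m) (hmeas : ∀ n, Measurable (X n))
    (hindep : iIndepFun X μ)
    (hdist : ∀ n i, μ {ω | X n ω = i} = ENNReal.ofReal (p i))
    (T : Ω → ℕ)
    (hT : ∀ ω, T ω = sInf {n : ℕ | ∀ i : Fin m, ∃ k < n, X k ω = i}) :
    ∫ ω, (T ω : ℝ) ∂μ
      = ∫ t in Set.Ioi (0 : ℝ), (1 - ∏ i, (1 - Real.exp (-(p i) * t))) := by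
  have hdist_real : ∀ n i, μ.real (X n ⁻¹' {i}) = p i := fun n i =>
    (congrArg ENNReal.toReal (hdist n i)).trans (ENNReal.toReal_ofReal (hp i).le)
  obtain rfl : T = CouponCollector.waitingTime X := funext hT
  rw [integral_one_sub_prod_one_sub_exp hp]
  exact integral_natCast_eq_of_hasSum (CouponCollector.measurableSet_lt_waitingTime hmeas)
    (CouponCollector.hasSum_measureReal_lt_waitingTime hmeas hindep hdist_real hp)

/-- Flajolet–Gardy–Thimonier integral representation of the coupon collector
expected waiting time. -/
theorem couponCollector_integral_formula
    {Ω : Type*} [MeasurableSpace Ω] (μ : Measure Ω) [IsProbabilityMeasure μ]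
    (m : ℕ) (hm : 0 < m) (p : Fin m → ℝ) (hp : ∀ i, 0 < p i)
    (hsum : ∑ i, p i = 1)
    (X : ℕ → Ω → Fin m) (hmeas : ∀ n, Measurable (X n))
    (hindep : iIndepFun X μ)
    (hdist : ∀ n i, μ {ω | X n ω = i} = ENNReal.ofReal (p i))
    (T : Ω → ℕ)
    (hT : ∀ ω, T ω = sInf {n : ℕ | ∀ i : Fin m, ∃ k < n, X k ω = i}) :
    ∫ ω, (T ω : ℝ) ∂μ
      = ∫ t in Set.Ioi (0 : ℝ), (1 - ∏ i, (1 - Real.exp (-(p i) * t))) :=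
  couponCollector_integral_formula_general μ m p hp X hmeas hindep hdist T hT
end

section
/- With the notation of the lattice-point counting function φ on ℕ^{k-l} with positive reals log π_{l+1} ≤ ... ≤ log π_k, S = ∑_j log π_j, P = ∏_j log π_j, and φ̃(i) the i-th vector in increasing order of |·|_π (assuming all |·|_π values distinct): for all i ≥ 1, (i·(k-l)!·P)^{1/(k-l)} - S ≤ |φ̃(i)|_π ≤ (i·(k-l)!·P)^{1/(k-l)}. -/
/-!
Let `N(T)` be the number of `y ∈ ℕ^d` with `∑ j, y j * w j ≤ T`, a lattice-point count for the
simplex of volume `T ^ d / (d! * ∏ j, w j)`. Slicing by the first coordinate writes `N(T)` as a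
sum of `(d-1)`-dimensional counts at heights `T - m * w 0`, and comparing that sum with a
telescoping sum of `(d+1)`-th powers (via the tangent-line inequality for `t ^ (d+1)`) gives, by
induction on `d`, `T ^ d ≤ N(T) * d! * ∏ j, w j ≤ (T + ∑ j, w j) ^ d`. For `T = wsum x` the
count `N(T)` is the rank `i` of `x`, and taking `d`-th roots gives the bounds.
-/

open Finset

theorem pow_succ_add_mul_sub_le {x y : ℝ} (hx : 0 ≤ x) (hy : 0 ≤ y) (n : ℕ) :
    x ^ (n + 1) + (n + 1) * x ^ n * (y - x) ≤ y ^ (n + 1) := by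
  rcases hx.eq_or_lt with rfl | hx
  · rcases n with _ | n <;> simp [hy]
  have bernoulli := one_add_mul_le_pow (a := y / x - 1) (by linarith [div_nonneg hy hx.le]) (n + 1)
  rw [add_sub_cancel, div_pow, le_div_iff₀ (pow_pos hx _)] at bernoulli
  have : x ^ (n + 1) * (1 + ((n + 1 : ℕ) : ℝ) * (y / x - 1)) =
      x ^ (n + 1) + (n + 1) * x ^ n * (y - x) := by
    field_simp
    push_cast
    ring
  linarith

theorem nat_mul_le_of_le_floor_div {a T : ℝ} (ha : 0 < a) (hT : 0 ≤ T) {m : ℕ}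
    (hm : m ≤ ⌊T / a⌋₊) : m * a ≤ T :=
  (le_div_iff₀ ha).1 ((Nat.le_floor_iff (div_nonneg hT ha.le)).1 hm)

theorem pow_succ_le_sum_mul_pow {a T : ℝ} (ha : 0 < a) (hT : 0 ≤ T) (n : ℕ) :
    T ^ (n + 1) ≤ ∑ m ∈ range (⌊T / a⌋₊ + 1), (n + 1) * a * (T - m * a) ^ n := by
  set g : ℕ → ℝ := fun m => max (T - m * a) 0 ^ (n + 1)
  have hstep : ∀ m ∈ range (⌊T / a⌋₊ + 1), g m - g (m + 1) ≤ (n + 1) * a * (T - m * a) ^ n := by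
    intro m hm
    have hmT : 0 ≤ T - m * a :=
      sub_nonneg.2 (nat_mul_le_of_le_floor_div ha hT (Nat.lt_succ_iff.1 (mem_range.1 hm)))
    set y := max (T - (m + 1 : ℕ) * a) 0
    have hgap : -a ≤ y - (T - m * a) := by
      have : T - (m + 1 : ℕ) * a ≤ y := le_max_left _ _
      push_cast at this
      linarith
    have htangent := pow_succ_add_mul_sub_le hmT (le_max_right _ _ : 0 ≤ y) n
    have := mul_le_mul_of_nonneg_left hgap (by positivity : (0 : ℝ) ≤ (n + 1) * (T - m * a) ^ n)
    simp only [g, max_eq_left hmT]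
    linarith
  have hlast : g (⌊T / a⌋₊ + 1) = 0 := by
    have : T < (⌊T / a⌋₊ + 1 : ℕ) * a := by
      rw [← div_lt_iff₀ ha]
      exact_mod_cast Nat.lt_floor_add_one (T / a)
    simp only [g, max_eq_right (sub_nonpos.2 this.le)]
    exact zero_pow n.succ_ne_zero
  calc T ^ (n + 1) = g 0 - g (⌊T / a⌋₊ + 1) := by simp [g, hlast, max_eq_left hT]
    _ = ∑ m ∈ range (⌊T / a⌋₊ + 1), (g m - g (m + 1)) := (sum_range_sub' g _).symm
    _ ≤ _ := sum_le_sum hstep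

theorem sum_mul_pow_le_pow_succ {a c : ℝ} (ha : 0 ≤ a) {K : ℕ} (hK : K * a ≤ c + a) (n : ℕ) :
    ∑ m ∈ range K, (n + 1) * a * (c - m * a) ^ n ≤ (c + a) ^ (n + 1) := by
  set g : ℕ → ℝ := fun m => (c + a - m * a) ^ (n + 1)
  have hstep : ∀ m ∈ range K, (n + 1) * a * (c - m * a) ^ n ≤ g m - g (m + 1) := by
    intro m hm
    have hmc : 0 ≤ c - m * a := by
      have : (m + 1 : ℝ) ≤ K := by exact_mod_cast mem_range.1 hm
      nlinarith
    have := pow_succ_add_mul_sub_le hmc (by linarith : 0 ≤ c - m * a + a) n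
    simp only [g]
    push_cast
    ring_nf at this ⊢
    linarith
  have hlast : 0 ≤ g K := pow_nonneg (by linarith) _
  calc ∑ m ∈ range K, (n + 1) * a * (c - m * a) ^ n
      ≤ ∑ m ∈ range K, (g m - g (m + 1)) := sum_le_sum hstep
    _ = g 0 - g K := sum_range_sub' g K
    _ ≤ (c + a) ^ (n + 1) := by simp only [g, CharP.cast_eq_zero, zero_mul, sub_zero]; linarith

theorem rpow_one_div_natCast_le_iff {t C : ℝ} {d : ℕ} (ht : 0 ≤ t) (hC : 0 ≤ C) (hd : d ≠ 0) :
    C ^ ((1 : ℝ) / d) ≤ t ↔ C ≤ t ^ d := by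
  rw [one_div, Real.rpow_inv_le_iff_of_pos hC ht (by positivity), Real.rpow_natCast]

theorem le_rpow_one_div_natCast_iff {t C : ℝ} {d : ℕ} (ht : 0 ≤ t) (hC : 0 ≤ C) (hd : d ≠ 0) :
    t ≤ C ^ ((1 : ℝ) / d) ↔ t ^ d ≤ C := by
  rw [one_div, Real.le_rpow_inv_iff_of_pos ht hC (by positivity), Real.rpow_natCast]

def latticeSimplex {d : ℕ} (w : Fin d → ℝ) (T : ℝ) : Set (Fin d → ℕ) :=
  {y | ∑ j, (y j : ℝ) * w j ≤ T}

section latticeSimplex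

variable {d : ℕ}

theorem mul_le_of_mem_latticeSimplex {w : Fin d → ℝ} (hw : ∀ j, 0 < w j) {T : ℝ}
    {y : Fin d → ℕ} (hy : y ∈ latticeSimplex w T) (j : Fin d) : (y j : ℝ) * w j ≤ T :=
  (single_le_sum (fun k _ => mul_nonneg (Nat.cast_nonneg _) (hw k).le) (mem_univ j)).trans hy

theorem latticeSimplex_finite {w : Fin d → ℝ} (hw : ∀ j, 0 < w j) (T : ℝ) :
    (latticeSimplex w T).Finite :=
  (Set.finite_Iic fun j => ⌊T / w j⌋₊).subset fun _ hy j =>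
    Nat.le_floor <| (le_div_iff₀ (hw j)).2 (mul_le_of_mem_latticeSimplex hw hy j)

theorem ncard_latticeSimplex_zero (w : Fin 0 → ℝ) {T : ℝ} (hT : 0 ≤ T) :
    (latticeSimplex w T).ncard = 1 := by
  simp [latticeSimplex, hT]

theorem cons_mem_latticeSimplex_iff {w : Fin (d + 1) → ℝ} {T : ℝ} (m : ℕ) (z : Fin d → ℕ) :
    Fin.cons m z ∈ latticeSimplex w T ↔ z ∈ latticeSimplex (Fin.tail w) (T - m * w 0) := by
  simp only [latticeSimplex, Set.mem_ofPred_eq, Fin.sum_univ_succ, Fin.cons_zero, Fin.cons_succ,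
    Fin.tail]
  constructor <;> intro h <;> linarith

theorem ncard_latticeSimplex_succ {w : Fin (d + 1) → ℝ} (hw : ∀ j, 0 < w j) (T : ℝ) :
    (latticeSimplex w T).ncard = ∑ m ∈ range (⌊T / w 0⌋₊ + 1),
      (latticeSimplex (Fin.tail w) (T - m * w 0)).ncard := by
  have hfin m := latticeSimplex_finite (w := Fin.tail w) (fun j => hw j.succ) (T - m * w 0)
  let cons (m : ℕ) : (Fin d → ℕ) ↪ (Fin (d + 1) → ℕ) :=
    ⟨fun z => Fin.cons m z, Fin.cons_right_injective (α := fun _ => ℕ) m⟩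
  have hdecomp : latticeSimplex w T =
      ↑((range (⌊T / w 0⌋₊ + 1)).biUnion fun m => (hfin m).toFinset.map (cons m)) := by
    ext y
    simp only [coe_biUnion, coe_map, Set.Finite.coe_toFinset, Set.mem_iUnion, Set.mem_image,
      mem_coe, mem_range, Nat.lt_succ_iff]
    constructor
    · intro hy
      refine ⟨y 0, Nat.le_floor ((le_div_iff₀ (hw 0)).2 (mul_le_of_mem_latticeSimplex hw hy 0)),
        Fin.tail y, ?_, Fin.cons_self_tail y⟩
      rwa [← cons_mem_latticeSimplex_iff, Fin.cons_self_tail]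
    · rintro ⟨m, -, z, hz, rfl⟩
      exact (cons_mem_latticeSimplex_iff m z).2 hz
  rw [hdecomp, Set.ncard_coe_finset, card_biUnion]
  · exact sum_congr rfl fun m _ => by rw [card_map, Set.ncard_eq_toFinset_card _ (hfin m)]
  · intro m₁ _ m₂ _ hne
    simp only [disjoint_left, mem_map]
    rintro _ ⟨z₁, -, rfl⟩ ⟨z₂, -, h⟩
    exact hne (by simpa [cons] using congr_fun h 0 : m₂ = m₁).symm

theorem ncard_latticeSimplex_succ_mul {w : Fin (d + 1) → ℝ} (hw : ∀ j, 0 < w j) (T : ℝ) :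
    ((latticeSimplex w T).ncard : ℝ) * (d + 1).factorial * ∏ j, w j =
      ∑ m ∈ range (⌊T / w 0⌋₊ + 1), (d + 1) * w 0 *
        ((latticeSimplex (Fin.tail w) (T - m * w 0)).ncard * d.factorial * ∏ j, Fin.tail w j) := by
  rw [ncard_latticeSimplex_succ hw, Nat.cast_sum, sum_mul, sum_mul, Fin.prod_univ_succ,
    Nat.factorial_succ]
  refine sum_congr rfl fun m _ => ?_
  simp only [Fin.tail, Nat.cast_mul, Nat.cast_succ]
  ring

theorem pow_le_ncard_latticeSimplex_mul {w : Fin d → ℝ} (hw : ∀ j, 0 < w j) {T : ℝ}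
    (hT : 0 ≤ T) : T ^ d ≤ (latticeSimplex w T).ncard * d.factorial * ∏ j, w j := by
  induction d generalizing T with
  | zero => simp [ncard_latticeSimplex_zero w hT]
  | succ d ih =>
    rw [ncard_latticeSimplex_succ_mul hw]
    refine (pow_succ_le_sum_mul_pow (hw 0) hT d).trans (sum_le_sum fun m hm => ?_)
    have hmT := nat_mul_le_of_le_floor_div (hw 0) hT (Nat.lt_succ_iff.1 (mem_range.1 hm))
    exact mul_le_mul_of_nonneg_left (ih (fun j => hw j.succ) (sub_nonneg.2 hmT))
      (by have := hw 0; positivity)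

theorem ncard_latticeSimplex_mul_le {w : Fin d → ℝ} (hw : ∀ j, 0 < w j) {T : ℝ} (hT : 0 ≤ T) :
    (latticeSimplex w T).ncard * d.factorial * ∏ j, w j ≤ (T + ∑ j, w j) ^ d := by
  induction d generalizing T with
  | zero => simp [ncard_latticeSimplex_zero w hT]
  | succ d ih =>
    have htail : 0 ≤ ∑ j, Fin.tail w j := sum_nonneg fun j _ => (hw j.succ).le
    have hM := nat_mul_le_of_le_floor_div (hw 0) hT le_rfl
    have hsum : T + ∑ j, w j = T + ∑ j, Fin.tail w j + w 0 := by
      rw [Fin.sum_univ_succ]; simp only [Fin.tail]; ring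
    rw [ncard_latticeSimplex_succ_mul hw, hsum]
    refine le_trans (sum_le_sum fun m hm => ?_)
      (sum_mul_pow_le_pow_succ (hw 0).le (c := T + ∑ j, Fin.tail w j) (by push_cast; linarith) d)
    have hmT := nat_mul_le_of_le_floor_div (hw 0) hT (Nat.lt_succ_iff.1 (mem_range.1 hm))
    rw [add_sub_right_comm]
    exact mul_le_mul_of_nonneg_left (ih (fun j => hw j.succ) (sub_nonneg.2 hmT))
      (by have := hw 0; positivity)

end latticeSimplex

theorem phiTilde_bounds_general
    (d : ℕ) (hd : 0 < d) (p : Fin d → ℝ) (hp : ∀ j, 1 < p j)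
    (wsum : (Fin d → ℕ) → ℝ)
    (hw : ∀ x, wsum x = ∑ j, (x j : ℝ) * Real.log (p j))
    (i : ℕ) (x : Fin d → ℕ)
    (hrank : Set.ncard {y : Fin d → ℕ | wsum y ≤ wsum x} = i) :
    ((i : ℝ) * d.factorial * ∏ j, Real.log (p j)) ^ ((1 : ℝ) / d)
        - (∑ j, Real.log (p j)) ≤ wsum x ∧
    wsum x ≤ ((i : ℝ) * d.factorial * ∏ j, Real.log (p j)) ^ ((1 : ℝ) / d) := by
  have hlog : ∀ j, 0 < Real.log (p j) := fun j => Real.log_pos (hp j)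
  have hT : 0 ≤ wsum x := hw x ▸ sum_nonneg fun j _ => mul_nonneg (Nat.cast_nonneg _) (hlog j).le
  have hcount : (latticeSimplex (fun j => Real.log (p j)) (wsum x)).ncard = i := by
    rw [← hrank]
    simp only [latticeSimplex, hw]
  have hC : 0 ≤ (i : ℝ) * d.factorial * ∏ j, Real.log (p j) := by
    have := prod_nonneg fun j (_ : j ∈ univ) => (hlog j).le
    positivity
  have hlower := pow_le_ncard_latticeSimplex_mul hlog hT
  have hupper := ncard_latticeSimplex_mul_le hlog hT
  rw [hcount] at hlower hupper
  constructor
  · have := sum_nonneg fun j (_ : j ∈ univ) => (hlog j).le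
    rw [sub_le_iff_le_add, rpow_one_div_natCast_le_iff (by positivity) hC hd.ne']
    exact hupper
  · exact (le_rpow_one_div_natCast_iff hT hC hd.ne').2 hlower

/-- Bounds on the weight of the `i`-th sub-composition in increasing weight order. -/
theorem phiTilde_bounds
    (d : ℕ) (hd : 0 < d) (p : Fin d → ℝ) (hp : ∀ j, 1 < p j) (hmono : Monotone p)
    (wsum : (Fin d → ℕ) → ℝ)
    (hw : ∀ x, wsum x = ∑ j, (x j : ℝ) * Real.log (p j))
    (hinj : Function.Injective wsum)
    (i : ℕ) (hi : 1 ≤ i) (x : Fin d → ℕ)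
    (hrank : Set.ncard {y : Fin d → ℕ | wsum y ≤ wsum x} = i) :
    ((i : ℝ) * d.factorial * ∏ j, Real.log (p j)) ^ ((1 : ℝ) / d)
        - (∑ j, Real.log (p j)) ≤ wsum x ∧
    wsum x ≤ ((i : ℝ) * d.factorial * ∏ j, Real.log (p j)) ^ ((1 : ℝ) / d) :=
  phiTilde_bounds_general d hd p hp wsum hw i x hrank
end

section
/- Let M_{n,i} = C(n-i-1, n/2-1) - C(n-i-1, n/2) for even n and 1 ≤ i ≤ n/2. Then M_{n,i} ≤ 2^{n-i+1} · n^{-3/2} · i · √(2/π) for all such n and i. -/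
/-!
Write n = 2m and N = n - i - 1. The ballot identity C(N, m-1) (N - m + 1) = C(N, m) m turns the
difference into C(N, m-1) · i / m. The lower Wallis bound `Real.Wallis.le_W` gives
C(2k, k)² π (2k+1)² ≤ 4 (k+1) 16^k, hence C(N, r) ≤ 2^(N+1) / √(π (N+1)) ≤ 2^(N+1) / √(π m) for every r,
and the right-hand side of the theorem is exactly 2^(N+1) / √(π m) · i / m.
-/

open Real Nat

theorem Real.Wallis.W_eq_centralBinom (k : ℕ) :
    Wallis.W k = 16 ^ k / ((k.centralBinom : ℝ) ^ 2 * (2 * k + 1)) := by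
  have hfac : ((2 * k)! : ℝ) = k.centralBinom * k ! * k ! := by
    rw [centralBinom_eq_two_mul_choose]
    exact_mod_cast (two_mul k ▸ add_choose_mul_factorial_mul_factorial k k).symm
  rw [Wallis.W_eq_factorial_ratio, hfac, pow_mul]
  field_simp
  norm_num

theorem Nat.centralBinom_sq_mul_pi_le (k : ℕ) :
    (k.centralBinom : ℝ) ^ 2 * π * (2 * k + 1) ^ 2 ≤ 4 * (k + 1) * 16 ^ k := by
  have hC : (0 : ℝ) < k.centralBinom := by exact_mod_cast k.centralBinom_pos
  have h := Wallis.le_W k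
  rw [Wallis.W_eq_centralBinom, le_div_iff₀ (by positivity)] at h
  field_simp at h
  linarith

theorem Nat.choose_half_sq_mul_pi_le (N : ℕ) :
    (N.choose (N / 2) : ℝ) ^ 2 * (π * (N + 1)) ≤ (2 ^ (N + 1)) ^ 2 := by
  obtain ⟨k, rfl | rfl⟩ := N.even_or_odd'
  · have h := centralBinom_sq_mul_pi_le k
    rw [centralBinom_eq_two_mul_choose] at h
    rw [Nat.mul_div_cancel_left k two_pos, show ((2 : ℝ) ^ (2 * k + 1)) ^ 2 = 4 * 16 ^ k by
      rw [← pow_mul, show (2 * k + 1) * 2 = 2 + 4 * k by ring, pow_add, pow_mul]; norm_num]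
    refine le_of_mul_le_mul_right ?_ (by positivity : (0 : ℝ) < 2 * k + 1)
    push_cast
    nlinarith [mul_nonneg (Nat.cast_nonneg (α := ℝ) k) (pow_nonneg (by norm_num : (0 : ℝ) ≤ 16) k)]
  · have h := centralBinom_sq_mul_pi_le (k + 1)
    rw [centralBinom_eq_two_mul_choose, mul_add_one, choose_succ_succ, choose_symm_half,
      ← two_mul] at h
    rw [show (2 * k + 1) / 2 = k by omega, show ((2 : ℝ) ^ (2 * k + 1 + 1)) ^ 2 = 16 ^ (k + 1) by
      rw [← pow_mul, show (2 * k + 1 + 1) * 2 = 4 * (k + 1) by ring, pow_mul]; norm_num]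
    refine le_of_mul_le_mul_right ?_ (by positivity : (0 : ℝ) < (2 * k + 3) ^ 2)
    push_cast at h ⊢
    have hZ : ((2 * k + 1).choose k : ℝ) ^ 2 * π * (2 * k + 3) ^ 2 ≤ (k + 2) * 16 ^ (k + 1) := by
      linarith
    have hk : (0 : ℝ) ≤ k := k.cast_nonneg
    have hY : (0 : ℝ) ≤ 16 ^ (k + 1) := by positivity
    nlinarith [mul_le_mul_of_nonneg_right hZ (by positivity : (0 : ℝ) ≤ 2 * k + 2),
      mul_nonneg hk hY, mul_nonneg (mul_nonneg hk hk) hY]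

theorem Nat.choose_le_two_pow_div_sqrt (N r : ℕ) :
    (N.choose r : ℝ) ≤ 2 ^ (N + 1) / √(π * (N + 1)) := by
  have hmid : (N.choose r : ℝ) ≤ N.choose (N / 2) := by exact_mod_cast choose_le_middle r N
  rw [le_div_iff₀ (by positivity), ← pow_le_pow_iff_left₀ (by positivity) (by positivity) two_ne_zero,
    mul_pow, sq_sqrt (by positivity)]
  exact le_trans (by gcongr) (choose_half_sq_mul_pi_le N)

theorem Nat.choose_sub_choose_succ_mul (n r : ℕ) (h : r ≤ n) :
    ((n.choose r : ℝ) - n.choose (r + 1)) * (r + 1) = n.choose r * (2 * r + 1 - n) := by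
  have key : (n.choose (r + 1) : ℝ) * (r + 1) = n.choose r * (n - r) := by
    exact_mod_cast choose_succ_right_eq n r
  linear_combination -key

theorem Real.rpow_neg_three_halves {x : ℝ} (hx : 0 ≤ x) : x ^ (-(3 / 2) : ℝ) = (x * √x)⁻¹ := by
  rw [rpow_neg hx, show (3 / 2 : ℝ) = 1 + 1 / 2 by norm_num, rpow_add' hx (by norm_num), rpow_one,
    sqrt_eq_rpow]

theorem nc_multiplicity_upper_bound (n i : ℕ) (hn : Even n)
    (hi1 : 1 ≤ i) (hi2 : i ≤ n / 2) :
    (Nat.choose (n - i - 1) (n / 2 - 1) : ℝ) - Nat.choose (n - i - 1) (n / 2)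
      ≤ 2 ^ (n - i + 1) * (n : ℝ) ^ (-(3 / 2) : ℝ) * i * Real.sqrt (2 / Real.pi) := by
  obtain ⟨m, rfl⟩ := hn
  obtain ⟨k, rfl⟩ : ∃ k, m = k + 1 := ⟨m - 1, by omega⟩
  rw [show (k + 1 + (k + 1)) / 2 = k + 1 by omega] at hi2 ⊢
  rw [Nat.add_sub_cancel]
  set N := k + 1 + (k + 1) - i - 1
  have hN : (N : ℝ) + i = 2 * k + 1 := by exact_mod_cast (show N + i = 2 * k + 1 by omega)
  have hdiff : (N.choose k : ℝ) - N.choose (k + 1) = N.choose k * i / (k + 1) := by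
    rw [eq_div_iff (by positivity), choose_sub_choose_succ_mul N k (by omega)]
    congr 1
    linarith
  have hrhs : (2 : ℝ) ^ (k + 1 + (k + 1) - i + 1) * ((k + 1 + (k + 1) : ℕ) : ℝ) ^ (-(3 / 2) : ℝ)
      * i * √(2 / π) = 2 ^ (N + 1) / √(π * (k + 1)) * i / (k + 1) := by
    rw [show k + 1 + (k + 1) - i + 1 = N + 1 + 1 by omega, rpow_neg_three_halves (by positivity)]
    push_cast
    rw [show (k + 1 + (k + 1) : ℝ) = 2 * (k + 1) by ring, sqrt_mul (by norm_num), sqrt_mul pi_pos.le,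
      sqrt_div (by norm_num)]
    field_simp
    ring
  rw [hdiff, hrhs]
  gcongr
  refine (choose_le_two_pow_div_sqrt N k).trans ?_
  gcongr
  exact_mod_cast (show k ≤ N by omega)
end

section
/- Suppose for each m ≥ 1 we have finitely many weight classes with weights W_{m,i} = ν(i)·ω(m) (for i up to the number of classes) and multiplicities M_{m,i}, where ν is positive increasing, ω > 0, and M_{m,1} ≥ (1/2)·e^{F(1)·G(m)}/h(1) for m large, with F(1) > 0, h(1) > 0, and G(m) → ∞. Then for every t with 0 ≤ t < F(1)/ν(1), the product ∏_i (1 - e^{-ν(i)·t·G(m)})^{M_{m,i}} tends to 0 as m → ∞. -/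
open Filter Real

/-! Only the first class matters: every factor lies in `[0, 1]`, so the product is at most
`(1 - x)^{M_{m,1}} ≤ exp (-M_{m,1} x)` with `x = e^{-ν(1) t G(m)}`, and the lower bound on
`M_{m,1}` gives `M_{m,1} x ≥ e^{(F(1) - ν(1) t) G(m)} / (2 h(1)) → ∞`. -/

lemma one_sub_exp_mem_Icc {y : ℝ} (hy : y ≤ 0) : 1 - exp y ∈ Set.Icc 0 1 :=
  ⟨sub_nonneg.2 (exp_le_one_iff.2 hy), sub_le_self 1 (exp_pos y).le⟩

lemma one_sub_pow_le_exp_neg_mul {x : ℝ} (hx : x ≤ 1) (n : ℕ) :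
    (1 - x) ^ n ≤ exp (-(n * x)) :=
  calc (1 - x) ^ n ≤ exp (-x) ^ n := pow_le_pow_left₀ (sub_nonneg.2 hx) (one_sub_le_exp_neg x) n
    _ = exp (-(n * x)) := by rw [← exp_nat_mul, mul_neg]

lemma tendsto_mul_exp_neg_atTop_of_exp_le {α : Type*} {l : Filter α} {G a : α → ℝ}
    {c F s : ℝ} (hG : Tendsto G l atTop) (hc : 0 < c) (hs : s < F)
    (ha : ∀ᶠ x in l, c * exp (F * G x) ≤ a x) :
    Tendsto (fun x => a x * exp (-(s * G x))) l atTop := by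
  have hlower : Tendsto (fun x => c * exp ((F - s) * G x)) l atTop :=
    (tendsto_exp_atTop.comp (hG.const_mul_atTop (sub_pos.2 hs))).const_mul_atTop hc
  refine tendsto_atTop_mono' l (ha.mono fun x hx => ?_) hlower
  calc c * exp ((F - s) * G x) = c * exp (F * G x) * exp (-(s * G x)) := by
        rw [mul_assoc, ← exp_add]; ring_nf
    _ ≤ a x * exp (-(s * G x)) := by gcongr

theorem product_tendsto_zero_below_threshold_general
    (ν G : ℕ → ℝ) (M : ℕ → ℕ → ℕ) (N : ℕ → ℕ) (F1 h1 : ℝ)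
    (hν : ∀ i, 0 < ν i)
    (hN : ∀ m, 1 ≤ N m) (hh : 0 < h1)
    (hG : Tendsto G atTop atTop)
    (hM1 : ∀ᶠ m in atTop, 1 / 2 * Real.exp (F1 * G m) / h1 ≤ (M m 1 : ℝ)) :
    ∀ t : ℝ, 0 ≤ t → t < F1 / ν 1 →
      Tendsto (fun m => ∏ i ∈ Finset.Icc 1 (N m),
          (1 - Real.exp (-(ν i) * t * G m)) ^ (M m i))
        atTop (nhds 0) := by
  intro t ht htlt
  have hfirst : Tendsto (fun m => (M m 1 : ℝ) * exp (-(ν 1 * t * G m))) atTop atTop :=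
    tendsto_mul_exp_neg_atTop_of_exp_le hG (inv_pos.2 (mul_pos two_pos hh))
      ((lt_div_iff₀' (hν 1)).1 htlt)
      (hM1.mono fun m hm => le_of_eq_of_le (by ring) hm)
  have hfactor : ∀ᶠ m in atTop, ∀ i,
      1 - exp (-(ν i) * t * G m) ∈ Set.Icc 0 1 := by
    filter_upwards [hG.eventually_ge_atTop 0] with m hGm i
    refine one_sub_exp_mem_Icc ?_
    linarith [mul_nonneg (mul_nonneg (hν i).le ht) hGm]
  refine squeeze_zero'
    (hfactor.mono fun m hm => Finset.prod_nonneg fun i _ => pow_nonneg (hm i).1 _)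
    (hfactor.mono fun m hm => ?_) (tendsto_exp_atBot.comp (tendsto_neg_atTop_atBot.comp hfirst))
  have hone_subset : {1} ⊆ Finset.Icc 1 (N m) := by simp [hN m]
  calc ∏ i ∈ Finset.Icc 1 (N m), (1 - exp (-(ν i) * t * G m)) ^ (M m i)
      ≤ (1 - exp (-(ν 1) * t * G m)) ^ (M m 1) := by
        simpa using Finset.prod_le_prod_of_subset_of_le_one hone_subset
          (fun i _ => pow_nonneg (hm i).1 _) (fun i _ _ => pow_le_one₀ (hm i).1 (hm i).2)
    _ ≤ exp (-(M m 1 * exp (-(ν 1 * t * G m)))) := by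
        simpa only [neg_mul] using one_sub_pow_le_exp_neg_mul (sub_nonneg.1 (hm 1).1) (M m 1)

/-- Key step of the main theorem: `Ψ_m(t) → 1` below the threshold, i.e. the
product tends to `0`. -/
theorem product_tendsto_zero_below_threshold
    (ν ω G : ℕ → ℝ) (M : ℕ → ℕ → ℕ) (N : ℕ → ℕ) (F1 h1 : ℝ)
    (hν : ∀ i, 0 < ν i) (hmono : Monotone ν) (hω : ∀ m, 0 < ω m)
    (hN : ∀ m, 1 ≤ N m) (hF : 0 < F1) (hh : 0 < h1)
    (hG : Tendsto G atTop atTop)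
    (hM1 : ∀ᶠ m in atTop, 1 / 2 * Real.exp (F1 * G m) / h1 ≤ (M m 1 : ℝ)) :
    ∀ t : ℝ, 0 ≤ t → t < F1 / ν 1 →
      Tendsto (fun m => ∏ i ∈ Finset.Icc 1 (N m),
          (1 - Real.exp (-(ν i) * t * G m)) ^ (M m i))
        atTop (nhds 0) :=
  product_tendsto_zero_below_threshold_general ν G M N F1 h1 hν hN hh hG hM1
end
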